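/- If y is an equilibrium of the reaction network ODE lying on the boundary of a positive stoichiometric compatibility class (i.e., y ∈ ∂ℝ^m_{≥0}, f(y) = 0, and y ∈ c + S for some c ∈ ℝ^m_{>0}), then the set W = {X_i : y_i = 0} is a semi-locking set, and hence y ∈ [(c+S) ∩ ℝ^m_{≥0}] ∩ L_W. -/

import Mathlib

/-!
At a nonnegative point `p`, pick a species `i` with `p i = 0`. A reaction consuming `i` has rate
zero, and any other reaction can only produce `i`, so every summand of the `i`-th component of
the vector field is nonnegative. At an equilibrium they therefore all vanish: a reaction producing
`i` either consumes `i` itself or has rate zero, and in the latter case some reactant species is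
absent from `p`.
-/

/-- The right-hand side of the chemical reaction network ODE. -/
def netF {m : ℕ} {ι : Type} [Fintype ι] (y yp : ι → Fin m → ℕ)
    (R : ι → (Fin m → ℝ) → ℝ) (x : Fin m → ℝ) : Fin m → ℝ :=
  ∑ r : ι, R r x • (fun i => (yp r i : ℝ) - (y r i : ℝ))

/-- The stoichiometric subspace. -/
def stoichSubspace {m : ℕ} {ι : Type} [Fintype ι] (y yp : ι → Fin m → ℕ) :
    Submodule ℝ (Fin m → ℝ) :=
  Submodule.span ℝ (Set.range fun r => fun i => (yp r i : ℝ) - (y r i : ℝ))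

def IsSemilocking {m : ℕ} {ι : Type} (y yp : ι → Fin m → ℕ) (W : Set (Fin m)) : Prop :=
  ∀ r, (∃ i ∈ W, yp r i ≠ 0) → ∃ i ∈ W, y r i ≠ 0

section
variable {m : ℕ} {ι : Type} (y yp : ι → Fin m → ℕ) (R : ι → (Fin m → ℝ) → ℝ)

theorem netF_apply [Fintype ι] (x : Fin m → ℝ) (i : Fin m) :
    netF y yp R x i = ∑ r, R r x * ((yp r i : ℝ) - y r i) := by
  simp [netF]

variable {y yp R}

theorem rate_mul_netChange_nonneg {r : ι} {x : Fin m → ℝ} {i : Fin m} (hR : 0 ≤ R r x)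
    (hconsumed : y r i ≠ 0 → R r x = 0) : 0 ≤ R r x * ((yp r i : ℝ) - y r i) := by
  by_cases hyi : y r i = 0
  · rw [hyi, Nat.cast_zero, sub_zero]
    exact mul_nonneg hR (Nat.cast_nonneg _)
  · rw [hconsumed hyi, zero_mul]

theorem isSemilocking_zeroSet_of_netF_eq_zero [Fintype ι]
    (hnonneg : ∀ r, ∀ x : Fin m → ℝ, (∀ i, 0 ≤ x i) → 0 ≤ R r x)
    (hzero_iff : ∀ r, ∀ x : Fin m → ℝ, (∀ i, 0 ≤ x i) →
      (R r x = 0 ↔ ∃ i, y r i ≠ 0 ∧ x i = 0))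
    {x : Fin m → ℝ} (hx : ∀ i, 0 ≤ x i) (hequilibrium : netF y yp R x = 0) :
    IsSemilocking y yp {i | x i = 0} := by
  rintro r ⟨i, hxi, hypi⟩
  have hterms : ∀ r', 0 ≤ R r' x * ((yp r' i : ℝ) - y r' i) := fun r' =>
    rate_mul_netChange_nonneg (hnonneg r' x hx) fun hy => (hzero_iff r' x hx).2 ⟨i, hy, hxi⟩
  have hsum : ∑ r', R r' x * ((yp r' i : ℝ) - y r' i) = 0 := by
    rw [← netF_apply, hequilibrium, Pi.zero_apply]
  have hterm : R r x * ((yp r i : ℝ) - y r i) = 0 :=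
    (Finset.sum_eq_zero_iff_of_nonneg fun r' _ => hterms r').1 hsum r (Finset.mem_univ r)
  rcases mul_eq_zero.1 hterm with hrate | hbalanced
  · obtain ⟨j, hyj, hxj⟩ := (hzero_iff r x hx).1 hrate
    exact ⟨j, hxj, hyj⟩
  · have hyi : yp r i = y r i := by exact_mod_cast sub_eq_zero.1 hbalanced
    exact ⟨i, hxi, hyi ▸ hypi⟩

end

theorem boundary_equilibrium_semilocking_general
    {m : ℕ} {ι : Type} [Fintype ι]
    (y yp : ι → Fin m → ℕ) (R : ι → (Fin m → ℝ) → ℝ)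
    (hnonneg : ∀ r, ∀ x : Fin m → ℝ, (∀ i, 0 ≤ x i) → 0 ≤ R r x)
    (hzero_iff : ∀ r, ∀ x : Fin m → ℝ, (∀ i, 0 ≤ x i) →
      (R r x = 0 ↔ ∃ i, y r i ≠ 0 ∧ x i = 0))
    (p c : Fin m → ℝ)
    (hpnn : ∀ i, 0 ≤ p i)
    (hequilibrium : netF y yp R p = 0)
    (hclass : p - c ∈ stoichSubspace y yp) :
    (∀ r, (∃ i, p i = 0 ∧ yp r i ≠ 0) → ∃ i, p i = 0 ∧ y r i ≠ 0) ∧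
    p ∈ ({x : Fin m → ℝ | x - c ∈ stoichSubspace y yp} ∩ {x | ∀ i, 0 ≤ x i}) ∩
          {x : Fin m → ℝ | ∀ i, x i = 0 ↔ p i = 0} :=
  ⟨isSemilocking_zeroSet_of_netF_eq_zero hnonneg hzero_iff hpnn hequilibrium,
    ⟨hclass, hpnn⟩, fun _ => Iff.rfl⟩

/-- A boundary equilibrium of a positive stoichiometric compatibility class gives
rise to a semi-locking set `W = {i : p i = 0}`, and hence the equilibrium lies in
`[(c + S) ∩ ℝ^m_{≥0}] ∩ L_W`. -/
theorem boundary_equilibrium_semilocking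
    {m : ℕ} {ι : Type} [Fintype ι]
    (y yp : ι → Fin m → ℕ) (R : ι → (Fin m → ℝ) → ℝ)
    (hnonneg : ∀ r, ∀ x : Fin m → ℝ, (∀ i, 0 ≤ x i) → 0 ≤ R r x)
    (hzero_iff : ∀ r, ∀ x : Fin m → ℝ, (∀ i, 0 ≤ x i) →
      (R r x = 0 ↔ ∃ i, y r i ≠ 0 ∧ x i = 0))
    (p c : Fin m → ℝ)
    (hpnn : ∀ i, 0 ≤ p i)
    (hboundary : ∃ i, p i = 0)
    (hequilibrium : netF y yp R p = 0)
    (hc : ∀ i, 0 < c i)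
    (hclass : p - c ∈ stoichSubspace y yp) :
    (∀ r, (∃ i, p i = 0 ∧ yp r i ≠ 0) → ∃ i, p i = 0 ∧ y r i ≠ 0) ∧
    p ∈ ({x : Fin m → ℝ | x - c ∈ stoichSubspace y yp} ∩ {x | ∀ i, 0 ≤ x i}) ∩
          {x : Fin m → ℝ | ∀ i, x i = 0 ↔ p i = 0} :=
  boundary_equilibrium_semilocking_general y yp R hnonneg hzero_iff p c hpnn hequilibrium hclass
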